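/- With the T-cost and MCX-cost functions of the cost model, conditional flattening does not increase the cost: t(with (let x' <- x && y) do (if x' s)) ≤ t(if x (if y s)) whenever c_ctrl·m(s) ≥ 2·c_ctrl·c_and + t_and, where c_and = m(let x' <- x && y) and t_and = 2·t(let x' <- x && y) are the MCX-cost and T-cost of computing and uncomputing the conjunction. In particular, for fixed per-primitive constants, the rewrite strictly decreases T-cost once m(s) is sufficiently large. -/
import Mathlib

/-- Core statements: skip, sequencing, quantum if, with-do blocks
(expanding to `s₁; s₂; reverse s₁`), Hadamard, constant-value
assignment, and other primitives carrying MCX-cost `cm` and T-cost `ct`. -/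
inductive Stmt : Type
  | skip : Stmt
  | seq : Stmt → Stmt → Stmt
  | ite : ℕ → Stmt → Stmt
  | withDo : Stmt → Stmt → Stmt
  | had : ℕ → Stmt
  | assignV : ℕ → ℕ → Stmt
  | prim : ℕ → ℕ → Stmt

/-- MCX-complexity (with-do expands to `s₁; s₂; reverse s₁`, and
reversal preserves MCX-complexity). -/
def mcx : Stmt → ℕ
  | .skip => 0
  | .seq s₁ s₂ => mcx s₁ + mcx s₂
  | .ite _ s => mcx s
  | .withDo s₁ s₂ => 2 * mcx s₁ + mcx s₂
  | .had _ => 1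
  | .assignV _ _ => 1
  | .prim cm _ => cm

/-- T-cost of a statement under one additional control, per the cost
model. -/
def tif (cctrl cCH : ℕ) : Stmt → ℕ
  | .skip => 0
  | .seq s₁ s₂ => tif cctrl cCH s₁ + tif cctrl cCH s₂
  | .withDo s₁ s₂ => 2 * tif cctrl cCH s₁ + tif cctrl cCH s₂
  | .had _ => cCH
  | .assignV _ _ => 0
  | .prim cm ct => cctrl * cm + ct
  | .ite _ s => cctrl * mcx s + tif cctrl cCH s

/-- T-complexity: `t(with s₁ do s₂) = 2·t(s₁) + t(s₂)` after expansion. -/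
def tcost (cctrl cCH : ℕ) : Stmt → ℕ
  | .skip => 0
  | .seq s₁ s₂ => tcost cctrl cCH s₁ + tcost cctrl cCH s₂
  | .withDo s₁ s₂ => 2 * tcost cctrl cCH s₁ + tcost cctrl cCH s₂
  | .ite _ s => tif cctrl cCH s
  | .had _ => 0
  | .assignV _ _ => 0
  | .prim _ ct => ct

/-- Conditional flattening does not increase T-cost:
`t(with s_and do (if x' s)) ≤ t(if x (if y s))` whenever
`c_ctrl·m(s) ≥ 2·c_ctrl·c_and + t_and`, where `c_and = m(s_and)` is the
MCX-cost and `t_and = 2·t(s_and)` the T-cost of computing and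
uncomputing the conjunction `s_and = (let x' <- x && y)`.  Moreover,
for fixed constants the rewrite strictly decreases T-cost once `m(s)`
is sufficiently large. -/
theorem conditional_flattening_tcost (cctrl cCH : ℕ) (x y x' : ℕ) (sand : Stmt) :
    (∀ s : Stmt,
      2 * cctrl * mcx sand + 2 * tcost cctrl cCH sand ≤ cctrl * mcx s →
      tcost cctrl cCH (.withDo sand (.ite x' s)) ≤ tcost cctrl cCH (.ite x (.ite y s))) ∧
    (0 < cctrl → ∃ N : ℕ, ∀ s : Stmt, N ≤ mcx s →
      tcost cctrl cCH (.withDo sand (.ite x' s)) < tcost cctrl cCH (.ite x (.ite y s))) := by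
  constructor
  · intro s h
    simp only [tcost, tif, mcx]
    omega
  · intro hc
    refine ⟨2 * tcost cctrl cCH sand + 1, fun s hs => ?_⟩
    simp only [tcost, tif, mcx]
    have : mcx s ≤ cctrl * mcx s := Nat.le_mul_of_pos_left _ hc
    omega
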